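/- Let X = S² × S¹ with the involution ρ((a,b,c),u) = ((a,b,c), ū), let f : X → X be f((a,b,c),u) = ((−a,−b,−c),u), and let A = {(a,b,0) ∈ S²} × {i,−i}. There is no continuous map F : X × [0,1] → X such that F(ρ(x),t) = ρ(F(x,t)) for all x ∈ X and t ∈ [0,1]; for each t ∈ [0,1] the map F(·,t) is fiber-preserving over the projection π₁ : X → S² (i.e. π₁(F((v,u),t)) = π₁(F((v,u'),t)) for all v ∈ S², u,u' ∈ S¹); F(x,0) = f(x) for all x ∈ X; and {x ∈ X : F(x,1) = x} = A. That is, A cannot be realized as the fixed point set of any map ℤ₂-fiberwise-homotopic to f. -/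

import Mathlib

/-- The unit 2-sphere in `ℝ³`. -/
def Sph2 : Set (ℝ × ℝ × ℝ) := {v | v.1 ^ 2 + v.2.1 ^ 2 + v.2.2 ^ 2 = 1}

/-- The antipodal map `v ↦ -v` on the 2-sphere. -/
def antipS2 (v : Sph2) : Sph2 :=
  ⟨(-(v : ℝ × ℝ × ℝ).1, -(v : ℝ × ℝ × ℝ).2.1, -(v : ℝ × ℝ × ℝ).2.2), by
    have h := v.2
    simp only [Sph2, Set.mem_setOf_eq] at h ⊢
    nlinarith [h]⟩

/-- The unit circle in `ℂ`. -/
def SphC : Set ℂ := {z | ‖z‖ = 1}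

/-- Complex conjugation on the unit circle. -/
def conjC (u : SphC) : SphC :=
  ⟨(starRingEnd ℂ) (u : ℂ), by
    have h := u.2
    simp only [SphC, Set.mem_setOf_eq] at h ⊢
    simpa using h⟩

/-- The total space `X = S² × S¹`. -/
def XS2S1 : Type := Sph2 × SphC

noncomputable instance : TopologicalSpace XS2S1 := by unfold XS2S1; infer_instance

/-- The involution `ρ((a,b,c),u) = ((a,b,c), ū)` on `X = S² × S¹`. -/
def rhoX (x : XS2S1) : XS2S1 := (x.1, conjC x.2)

/-- The map `f((a,b,c),u) = ((-a,-b,-c),u)` on `X = S² × S¹`. -/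
def fX (x : XS2S1) : XS2S1 := (antipS2 x.1, x.2)

/-- The subset `A = {(a,b,0) ∈ S²} × {i,-i}` of `X = S² × S¹`. -/
def AX : Set XS2S1 :=
  {x | (x.1 : ℝ × ℝ × ℝ).2.2 = 0 ∧ ((x.2 : ℂ) = Complex.I ∨ (x.2 : ℂ) = -Complex.I)}

/-! The point `p = (e₁, 1)`, with `e₁ = (1, 0, 0)`, is `ρ`-fixed, so by equivariance its track
`F(p, t)` has circle coordinate in `{±1}`, hence equal to `1` throughout by connectedness.
At time `1` the fiber over `e₁` contains the point `(e₁, i)` of `A`, which is fixed, so `F(p, 1)`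
lies over `e₁` as well: `p` is fixed by `F(·, 1)` without lying in `A`. -/

def Sph2.e₁ : Sph2 := ⟨(1, 0, 0), by norm_num [Sph2]⟩

def SphC.one : SphC := ⟨1, by simp [SphC]⟩

def SphC.I : SphC := ⟨Complex.I, by simp [SphC]⟩

lemma conjC_eq_self_iff (u : SphC) : conjC u = u ↔ (u : ℂ).im = 0 := by
  rw [conjC, Subtype.ext_iff, Complex.conj_eq_iff_im]

lemma coe_eq_one_or_neg_one_of_conjC_eq_self {u : SphC} (hu : conjC u = u) :
    (u : ℂ) = 1 ∨ (u : ℂ) = -1 := by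
  have him := (conjC_eq_self_iff u).mp hu
  have hnorm : ‖(u : ℂ)‖ = 1 := u.2
  rw [← Complex.re_add_im (u : ℂ), him] at hnorm ⊢
  simp only [Complex.ofReal_zero, zero_mul, add_zero, Complex.norm_real, Real.norm_eq_abs] at hnorm ⊢
  rcases abs_eq (zero_le_one' ℝ) |>.mp hnorm with h | h <;> simp [h]

lemma coe_eq_one_of_forall_conjC_eq_self {T : Type*} [TopologicalSpace T]
    [PreconnectedSpace T] {γ : T → SphC} (hγ : Continuous γ)
    (hfix : ∀ t, conjC (γ t) = γ t) {t₀ : T} (h₀ : (γ t₀ : ℂ) = 1) (t : T) :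
    (γ t : ℂ) = 1 := by
  refine (coe_eq_one_or_neg_one_of_conjC_eq_self (hfix t)).resolve_right fun ht => ?_
  have hre : Continuous fun s => (γ s : ℂ).re := by fun_prop
  have hzero : (0 : ℝ) ∈ Set.Icc (γ t : ℂ).re (γ t₀ : ℂ).re := by
    rw [ht, h₀]; norm_num
  obtain ⟨s, hs⟩ := intermediate_value_univ t t₀ hre hzero
  rcases coe_eq_one_or_neg_one_of_conjC_eq_self (hfix s) with h | h <;>
    simp [h] at hs

lemma mk_e₁_I_mem_AX : ((Sph2.e₁, SphC.I) : XS2S1) ∈ AX :=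
  ⟨rfl, Or.inl rfl⟩

lemma mk_e₁_one_notMem_AX : ((Sph2.e₁, SphC.one) : XS2S1) ∉ AX := by
  rintro ⟨-, h | h⟩ <;> simp [SphC.one, Complex.ext_iff] at h

lemma rhoX_mk_e₁_one : rhoX (Sph2.e₁, SphC.one) = (Sph2.e₁, SphC.one) :=
  Prod.ext rfl <| (conjC_eq_self_iff _).mpr <| by simp [SphC.one]

/-- The set `A = {(a,b,0)} × {i,-i}` cannot be realized as the fixed point set of any
map `ℤ₂`-fiberwise-homotopic to `f((a,b,c),u) = ((-a,-b,-c),u)`, where fibers are those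
of the projection `π₁ : S² × S¹ → S²`. -/
theorem no_equivariant_fiberwise_homotopy_realizing_A :
    ¬ ∃ F : XS2S1 × unitInterval → XS2S1,
        Continuous F ∧
        (∀ (x : XS2S1) (t : unitInterval), F (rhoX x, t) = rhoX (F (x, t))) ∧
        (∀ (t : unitInterval) (v : Sph2) (u u' : SphC),
          (F ((v, u), t)).1 = (F ((v, u'), t)).1) ∧
        (∀ x : XS2S1, F (x, 0) = fX x) ∧
        {x : XS2S1 | F (x, 1) = x} = AX := by
  rintro ⟨F, hF, hEquiv, hFib, hStart, hEnd⟩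
  set p : XS2S1 := (Sph2.e₁, SphC.one)
  have hfix : ∀ t, conjC (F (p, t)).2 = (F (p, t)).2 := fun t => by
    have := hEquiv p t
    rw [rhoX_mk_e₁_one] at this
    exact (congrArg Prod.snd this).symm
  have hsnd : ((F (p, 1)).2 : ℂ) = 1 :=
    coe_eq_one_of_forall_conjC_eq_self (γ := fun t => (F (p, t)).2)
      (continuous_snd.comp (hF.comp (.prodMk_right p))) hfix (t₀ := 0)
      (show ((F (p, 0)).2 : ℂ) = 1 by rw [hStart]; rfl) 1
  have hI_fixed : ((Sph2.e₁, SphC.I) : XS2S1) ∈ {x : XS2S1 | F (x, 1) = x} :=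
    hEnd ▸ mk_e₁_I_mem_AX
  have hfst : (F (p, 1)).1 = Sph2.e₁ := by
    rw [hFib 1 Sph2.e₁ SphC.one SphC.I, hI_fixed]
  have hp_fixed : p ∈ {x : XS2S1 | F (x, 1) = x} := Prod.ext hfst (Subtype.ext hsnd)
  exact mk_e₁_one_notMem_AX (hEnd ▸ hp_fixed)
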